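/- arXiv:1404.5190 — 2 statements merged into one kernel-verified Lean document; each statement's English description precedes it below -/
import Mathlib

section
/- Given an m×N matrix A with unit-norm columns spanning R^m and an integer k ∈ [N]: the number of optimal solutions to min_{‖x‖₀ ≤ k} ‖Ax − b‖₂ is finite for every b ≠ 0 if and only if k < spark(A). -/
open Finset

/-- The spark of a dictionary: the smallest number of linearly dependent columns
(`⊤` if the columns are linearly independent). -/
noncomputable def spark {m N : ℕ} (A : Fin N → EuclideanSpace ℝ (Fin m)) : ℕ∞ :=
  sInf {s : ℕ∞ | ∃ S : Finset (Fin N), (S.card : ℕ∞) = s ∧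
    ¬ LinearIndependent ℝ (fun i : S => A i)}

section aux

variable {m N : ℕ}

lemma sum_supported (A : Fin N → EuclideanSpace ℝ (Fin m)) (c : Fin N → ℝ)
    (S : Finset (Fin N)) (hc : ∀ i ∉ S, c i = 0) :
    ∑ i, c i • A i = ∑ i : S, c (i : Fin N) • A (i : Fin N) := by
  rw [Finset.sum_coe_sort S (fun i => c i • A i)]
  exact (Finset.sum_subset (Finset.subset_univ S)
    (fun i _ hi => by rw [hc i hi, zero_smul])).symm

lemma dep_iff (A : Fin N → EuclideanSpace ℝ (Fin m)) (S : Finset (Fin N)) :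
    ¬ LinearIndependent ℝ (fun i : S => A i) ↔
    ∃ c : Fin N → ℝ, (∀ i ∉ S, c i = 0) ∧ ∑ i, c i • A i = 0 ∧ c ≠ 0 := by
  classical
  rw [Fintype.linearIndependent_iff]
  push_neg
  constructor
  · rintro ⟨g, hg0, i0, hi0⟩
    refine ⟨fun i => if h : i ∈ S then g ⟨i, h⟩ else 0, fun i hi => dif_neg hi, ?_, ?_⟩
    · rw [sum_supported A _ S (fun i hi => dif_neg hi)]
      rw [← hg0]
      exact Finset.sum_congr rfl fun i _ => by rw [dif_pos i.2]
    · intro h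
      apply hi0
      have := congrFun h (i0 : Fin N)
      simpa [dif_pos i0.2] using this
  · rintro ⟨c, hsupp, hsum, hc⟩
    obtain ⟨j, hj⟩ := Function.ne_iff.mp hc
    have hjS : j ∈ S := by
      by_contra h
      exact hj (hsupp j h)
    refine ⟨fun i => c i, ?_, ⟨⟨j, hjS⟩, hj⟩⟩
    rw [← sum_supported A c S hsupp]
    exact hsum

end aux

/-- For a dictionary `A` (unit-norm columns spanning `ℝ^m`) and `k ∈ [N]`: the set of optimal
solutions to `min_{‖x‖₀ ≤ k} ‖Ax - b‖₂` is finite for every `b ≠ 0` if and only if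
`k < spark(A)`. -/
theorem finite_list_iff_spark {m N : ℕ}
    (A : Fin N → EuclideanSpace ℝ (Fin m)) (k : ℕ)
    (hunit : ∀ i, ‖A i‖ = 1)
    (hspan : Submodule.span ℝ (Set.range A) = ⊤)
    (hk1 : 1 ≤ k) (hkN : k ≤ N) :
    (∀ b : EuclideanSpace ℝ (Fin m), b ≠ 0 →
      {x : Fin N → ℝ | {i | x i ≠ 0}.ncard ≤ k ∧
        ∀ y : Fin N → ℝ, {i | y i ≠ 0}.ncard ≤ k →
          ‖(∑ i, x i • A i) - b‖ ≤ ‖(∑ i, y i • A i) - b‖}.Finite) ↔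
    (k : ℕ∞) < spark A := by
  classical
  constructor
  · -- finiteness → k < spark
    intro h
    by_contra hnot
    push_neg at hnot
    -- get a dependent set of size ≤ k
    have hex : ∃ s ∈ {s : ℕ∞ | ∃ S : Finset (Fin N), (S.card : ℕ∞) = s ∧
        ¬ LinearIndependent ℝ (fun i : S => A i)}, s ≤ (k : ℕ∞) := by
      by_contra hc
      push_neg at hc
      have hle : (k : ℕ∞) + 1 ≤ spark A :=
        le_sInf fun s hs => (ENat.add_one_le_iff (by simp)).mpr (hc s hs)
      have hk' : (k : ℕ∞) < (k : ℕ∞) + 1 := by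
        exact_mod_cast Nat.lt_succ_self k
      exact absurd (lt_of_lt_of_le hk' (hle.trans hnot)) (lt_irrefl _)
    obtain ⟨s, ⟨S, hScard, hSdep⟩, hsk⟩ := hex
    have hcard : S.card ≤ k := by
      have h' : (S.card : ℕ∞) ≤ (k : ℕ∞) := by rw [hScard]; exact hsk
      exact_mod_cast h'
    obtain ⟨c, hcsupp, hcsum, hcne⟩ := (dep_iff A S).mp hSdep
    obtain ⟨j0, hj0⟩ := Function.ne_iff.mp hcne
    have hj0S : j0 ∈ S := by
      by_contra hj
      exact hj0 (hcsupp j0 hj)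
    have hb : A j0 ≠ 0 := by
      intro hb0
      have := hunit j0
      rw [hb0] at this
      simp at this
    set e : Fin N → ℝ := fun j => if j = j0 then 1 else 0 with he
    set F : ℝ → (Fin N → ℝ) := fun t j => e j + t * c j with hF
    have hFsum : ∀ t, ∑ i, F t i • A i = A j0 := by
      intro t
      have h1 : ∑ i, e i • A i = A j0 := by
        simp [he, ite_smul]
      have h2 : ∑ i, F t i • A i = ∑ i, e i • A i + t • ∑ i, c i • A i := by
        simp only [hF, add_smul, Finset.sum_add_distrib, mul_smul, ← Finset.smul_sum]
      rw [h2, h1, hcsum, smul_zero, add_zero]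
    have hFsupp : ∀ t, {i | F t i ≠ 0} ⊆ (S : Set (Fin N)) := by
      intro t i hi
      simp only [Set.mem_setOf_eq, hF] at hi
      by_contra hiS
      have h1 : e i = 0 := by
        simp only [he, ite_eq_right_iff]
        intro hij
        exact absurd (hij ▸ hj0S) hiS
      have h2 : c i = 0 := hcsupp i hiS
      apply hi
      rw [h1, h2, mul_zero, add_zero]
    have hFk : ∀ t, {i | F t i ≠ 0}.ncard ≤ k := by
      intro t
      calc {i | F t i ≠ 0}.ncard ≤ (S : Set (Fin N)).ncard :=
            Set.ncard_le_ncard (hFsupp t) (Set.toFinite _)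
        _ = S.card := Set.ncard_coe_finset S
        _ ≤ k := hcard
    have hFmem : ∀ t, F t ∈ {x : Fin N → ℝ | {i | x i ≠ 0}.ncard ≤ k ∧
        ∀ y : Fin N → ℝ, {i | y i ≠ 0}.ncard ≤ k →
          ‖(∑ i, x i • A i) - A j0‖ ≤ ‖(∑ i, y i • A i) - A j0‖} := by
      intro t
      refine ⟨hFk t, fun y _ => ?_⟩
      rw [hFsum t, sub_self, norm_zero]
      exact norm_nonneg _
    have hFinj : Function.Injective F := by
      intro t t' htt
      have := congrFun htt j0
      simp only [hF] at this
      have h2 : t * c j0 = t' * c j0 := by linarith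
      exact mul_right_cancel₀ hj0 h2
    exact (Set.infinite_of_injective_forall_mem hFinj hFmem) (h (A j0) hb)
  · -- k < spark → finiteness
    intro hlt b _
    have hind : ∀ S : Finset (Fin N), S.card ≤ k →
        LinearIndependent ℝ (fun i : S => A i) := by
      intro S hS
      by_contra hdep
      have h1 : spark A ≤ (S.card : ℕ∞) := sInf_le ⟨S, rfl, hdep⟩
      have h2 : spark A ≤ (k : ℕ∞) := h1.trans (by exact_mod_cast hS)
      exact absurd hlt (not_lt.mpr h2)
    refine Set.Finite.of_finite_image (f := fun x => {i | x i ≠ 0}) (Set.toFinite _) ?_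
    rintro x ⟨hxk, hxmin⟩ y ⟨hyk, hymin⟩ hxy
    simp only at hxy
    set u := ∑ i, x i • A i with hu
    set v := ∑ i, y i • A i with hv
    have hμ : ‖u - b‖ = ‖v - b‖ := le_antisymm (hxmin y hyk) (hymin x hxk)
    set z : Fin N → ℝ := fun i => (2:ℝ)⁻¹ * (x i + y i) with hz
    have hzsupp : {i | z i ≠ 0} ⊆ {i | x i ≠ 0} := by
      intro i hi
      simp only [Set.mem_setOf_eq, hz] at hi
      by_contra hxi
      simp only [Set.mem_setOf_eq, not_not] at hxi
      have hyi : y i = 0 := by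
        by_contra hyi
        have : i ∈ {i | y i ≠ 0} := hyi
        rw [← hxy] at this
        exact this hxi
      apply hi
      rw [hxi, hyi, add_zero, mul_zero]
    have hzk : {i | z i ≠ 0}.ncard ≤ k :=
      le_trans (Set.ncard_le_ncard hzsupp (Set.toFinite _)) hxk
    have hzsum : ∑ i, z i • A i = (2:ℝ)⁻¹ • (u + v) := by
      simp only [hz, hu, hv, mul_smul, ← Finset.smul_sum, add_smul, Finset.sum_add_distrib]
    have hzmin : ‖u - b‖ ≤ ‖(2:ℝ)⁻¹ • (u + v) - b‖ := by
      have := hxmin z hzk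
      rwa [hzsum] at this
    have hmid : (2:ℝ)⁻¹ • (u + v) - b = (2:ℝ)⁻¹ • ((u - b) + (v - b)) := by
      rw [smul_add, smul_add]
      rw [show (2:ℝ)⁻¹ • (u - b) + (2:ℝ)⁻¹ • (v - b)
          = (2:ℝ)⁻¹ • u + (2:ℝ)⁻¹ • v - ((2:ℝ)⁻¹ + (2:ℝ)⁻¹) • b by
        rw [add_smul, smul_sub, smul_sub]; abel]
      norm_num
    have hnorm : ‖u - b‖ ≤ (2:ℝ)⁻¹ * ‖(u - b) + (v - b)‖ := by
      rw [hmid] at hzmin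
      rwa [norm_smul, Real.norm_eq_abs, abs_of_pos (by norm_num : (0:ℝ) < 2⁻¹)] at hzmin
    have hpar := parallelogram_law_with_norm ℝ (u - b) (v - b)
    have hsub : ‖(u - b) - (v - b)‖ = 0 := by
      nlinarith [norm_nonneg ((u - b) - (v - b)), norm_nonneg ((u - b) + (v - b)),
        norm_nonneg (u - b), hμ, hnorm, hpar]
    have huv : u = v := by
      have h0 : (u - b) - (v - b) = 0 := norm_eq_zero.mp hsub
      have : u - v = 0 := by rw [← h0]; abel
      exact sub_eq_zero.mp this
    by_contra hne
    set S : Finset (Fin N) := {i | x i ≠ 0}.toFinset with hS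
    have hScard : S.card ≤ k := by
      have h' : S.card = {i | x i ≠ 0}.ncard := by
        rw [hS]
        exact (Set.ncard_eq_toFinset_card' _).symm
      rw [h']
      exact hxk
    have hdep : ¬ LinearIndependent ℝ (fun i : S => A i) := by
      rw [dep_iff]
      refine ⟨x - y, ?_, ?_, sub_ne_zero.mpr hne⟩
      · intro i hi
        rw [hS, Set.mem_toFinset] at hi
        simp only [Set.mem_setOf_eq, not_not] at hi
        have hyi : y i = 0 := by
          by_contra hyi
          have : i ∈ {i | y i ≠ 0} := hyi
          rw [← hxy] at this
          exact this hi
        simp [hi, hyi]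
      · have : ∑ i, (x i - y i) • A i = u - v := by
          simp only [hu, hv, sub_smul, Finset.sum_sub_distrib]
        simpa [huv] using this
    exact hdep (hind S hScard)
end

section
/- Let A be an m×N matrix with k < spark(A) − 1 (every k+1 columns independent). Then for b drawn uniformly from the unit sphere in R^m, with probability 1 the optimal k-sparse approximation argmin_{‖x‖₀≤k} ‖Ax − b‖₂ is unique. Conversely, if k ≥ spark(A) − 1, the probability of uniqueness is strictly less than 1. -/
open Finset MeasureTheory

/-!
If `b` is equidistant from no two distinct spans of at most `k` columns, a best `k`-term
approximation is the projection of `b` onto the nearest such span `V`, and when every `k + 1`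
columns are independent, the columns spanning `V` and the coefficients are determined. Each
equidistant set is the zero set of a nonzero quadratic form, hence null, and a null cone meets
the sphere in a null set.

Conversely, if some `k + 1` columns are dependent, there is a span `V` of at most `k` columns,
maximal among such spans, whose generic points have two different `k`-sparse representations
(add a kernel vector, or exchange a column for a dependent one). The open cone of `b` strictly
closer to `V` than to any other such span, projecting to a generic point of `V`, meets the sphere
in a set of positive measure on which the best approximation is not unique.
-/

open Metric Set RealInnerProductSpace Pointwise Function

section Projection

variable {E : Type*} [NormedAddCommGroup E] [InnerProductSpace ℝ E]
  (K : Submodule ℝ E) [K.HasOrthogonalProjection]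

theorem Submodule.norm_sub_sq_eq_norm_sub_starProjection_sq_add (b : E) {w : E} (hw : w ∈ K) :
    ‖b - w‖ ^ 2 = ‖b - K.starProjection b‖ ^ 2 + ‖K.starProjection b - w‖ ^ 2 := by
  rw [sq, sq, sq, ← norm_add_sq_eq_norm_sq_add_norm_sq_real
    (K.starProjection_inner_eq_zero b _ (K.sub_mem (K.starProjection_apply_mem b) hw)),
    sub_add_sub_cancel]

theorem Submodule.norm_sub_starProjection_le (b : E) {w : E} (hw : w ∈ K) :
    ‖b - K.starProjection b‖ ≤ ‖b - w‖ := by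
  have := K.norm_sub_sq_eq_norm_sub_starProjection_sq_add b hw
  exact le_of_sq_le_sq (by nlinarith [sq_nonneg ‖K.starProjection b - w‖]) (norm_nonneg _)

theorem Submodule.eq_starProjection_of_norm_sub_le (b : E) {w : E} (hw : w ∈ K)
    (h : ‖b - w‖ ≤ ‖b - K.starProjection b‖) : w = K.starProjection b := by
  have := K.norm_sub_sq_eq_norm_sub_starProjection_sq_add b hw
  have hsq : ‖K.starProjection b - w‖ ^ 2 = 0 := by
    nlinarith [norm_nonneg (b - w), sq_nonneg ‖K.starProjection b - w‖]
  rw [sq_eq_zero_iff, norm_eq_zero, sub_eq_zero] at hsq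
  exact hsq.symm

theorem Submodule.norm_sub_starProjection_sq (b : E) :
    ‖b - K.starProjection b‖ ^ 2 = ‖b‖ ^ 2 - ⟪K.starProjection b, b⟫ := by
  have horth : ⟪b - K.starProjection b, K.starProjection b⟫ = 0 :=
    K.starProjection_inner_eq_zero b _ (K.starProjection_apply_mem b)
  rw [← real_inner_self_eq_norm_sq, ← real_inner_self_eq_norm_sq, inner_sub_right, horth,
    sub_zero, inner_sub_left, real_inner_comm]

theorem Submodule.norm_sub_starProjection_pos {b : E} (hb : b ∉ K) :
    0 < ‖b - K.starProjection b‖ :=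
  norm_pos_iff.mpr fun h => hb (sub_eq_zero.mp h ▸ K.starProjection_apply_mem b)

theorem Submodule.norm_sub_starProjection_smul {r : ℝ} (hr : 0 ≤ r) (b : E) :
    ‖r • b - K.starProjection (r • b)‖ = r * ‖b - K.starProjection b‖ := by
  rw [map_smul, ← smul_sub, norm_smul, Real.norm_of_nonneg hr]

end Projection

section NullSets

variable {E : Type*} [NormedAddCommGroup E] [MeasurableSpace E] [BorelSpace E] (μ : Measure E)
  [SFinite μ] [μ.IsAddRightInvariant]

/-- Both iterated integrals of the indicator of `{(x, t) | x + t • v ∈ Z}`: slicing in `t` gives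
`0`, slicing in `x` gives `μ Z` for every `t`, hence `μ Z * ∞ = 0`. -/
theorem measure_eq_zero_of_forall_null_on_lines [NormedSpace ℝ E] [FiniteDimensional ℝ E]
    {Z : Set E} (hZ : MeasurableSet Z) (v : E) (h : ∀ x, volume {t : ℝ | x + t • v ∈ Z} = 0) :
    μ Z = 0 := by
  have hW : MeasurableSet {p : E × ℝ | p.1 + p.2 • v ∈ Z} := hZ.preimage (by fun_prop)
  have key := (Measure.prod_apply hW (μ := μ) (ν := volume)).symm.trans
    (Measure.prod_apply_symm hW)
  have htrans : ∀ t : ℝ, μ {x | x + t • v ∈ Z} = μ Z := fun t =>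
    measure_preimage_add_right μ (t • v) Z
  simp only [preimage_ofPred_eq, h, lintegral_zero, htrans, lintegral_const,
    Real.volume_univ] at key
  simpa using key.symm

variable [InnerProductSpace ℝ E] [FiniteDimensional ℝ E]

theorem measure_setOf_inner_apply_self_eq_zero (T : E →L[ℝ] E) {v : E} (hv : ⟪T v, v⟫ ≠ 0) :
    μ {x | ⟪T x, x⟫ = 0} = 0 := by
  refine measure_eq_zero_of_forall_null_on_lines μ
    (isClosed_eq (by fun_prop) continuous_const).measurableSet v fun x => ?_
  let p : Polynomial ℝ := .C ⟪T v, v⟫ * .X ^ 2 + .C (⟪T x, v⟫ + ⟪T v, x⟫) * .X + .C ⟪T x, x⟫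
  have hp : p ≠ 0 := fun h0 => hv <| by simpa [p] using congrArg (Polynomial.coeff · 2) h0
  have hexpand : ∀ t : ℝ, ⟪T (x + t • v), x + t • v⟫ = p.eval t := fun t => by
    simp only [p, map_add, map_smul, inner_add_left, inner_add_right, real_inner_smul_left,
      real_inner_smul_right, Polynomial.eval_add, Polynomial.eval_mul, Polynomial.eval_pow,
      Polynomial.eval_C, Polynomial.eval_X]
    ring
  refine measure_mono_null (fun t ht => ?_) ((Polynomial.finite_setOfPred_isRoot hp).measure_zero _)
  exact (hexpand t).symm.trans ht

/-- Equidistance from `K` and `L` is the vanishing of the quadratic form of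
`K.starProjection - L.starProjection`, which is positive at a vector of `K` outside `L`. -/
theorem measure_setOf_norm_sub_starProjection_eq {K L : Submodule ℝ E} (h : K ≠ L) :
    μ {b | ‖b - K.starProjection b‖ = ‖b - L.starProjection b‖} = 0 := by
  wlog hKL : ¬ K ≤ L generalizing K L
  · simpa only [eq_comm] using this h.symm fun hLK => h (le_antisymm (not_not.mp hKL) hLK)
  set T : E →L[ℝ] E := K.starProjection - L.starProjection
  have hT : ∀ b, ⟪T b, b⟫ = ‖b - L.starProjection b‖ ^ 2 - ‖b - K.starProjection b‖ ^ 2 := by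
    intro b
    rw [K.norm_sub_starProjection_sq, L.norm_sub_starProjection_sq, sub_apply, inner_sub_left]
    ring
  obtain ⟨v, hvK, hvL⟩ := SetLike.not_le_iff_exists.mp hKL
  have hv : ⟪T v, v⟫ ≠ 0 := by
    rw [hT, K.starProjection_eq_self_iff.mpr hvK, sub_self, norm_zero]
    simpa using (L.norm_sub_starProjection_pos hvL).ne'
  refine measure_mono_null (fun b hb => ?_) (measure_setOf_inner_apply_self_eq_zero μ T hv)
  simp only [mem_ofPred_eq, hT] at hb ⊢
  rw [hb, sub_self]

end NullSets

section Sphere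

variable {E : Type*} [NormedAddCommGroup E] [NormedSpace ℝ E] [MeasurableSpace E] [BorelSpace E]
  (μ : Measure E)

theorem toSphere_eq_zero_of_cone {C : Set E} (hC : MeasurableSet C)
    (hcone : ∀ r : ℝ, 0 < r → ∀ x ∈ C, r • x ∈ C) (h0 : μ C = 0) :
    μ.toSphere {b : sphere (0 : E) 1 | (b : E) ∈ C} = 0 := by
  have hs : MeasurableSet {b : sphere (0 : E) 1 | (b : E) ∈ C} := measurable_subtype_coe hC
  rw [Measure.toSphere_apply' _ hs, measure_mono_null _ h0, mul_zero]
  rintro _ ⟨r, hr, _, ⟨b, hb, rfl⟩, rfl⟩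
  exact hcone r hr.1 _ hb

theorem toSphere_ne_zero_of_isOpen [FiniteDimensional ℝ E] [μ.IsOpenPosMeasure] {U : Set E}
    (hU : IsOpen U) {b : sphere (0 : E) 1} (hb : (b : E) ∈ U) :
    μ.toSphere {b : sphere (0 : E) 1 | (b : E) ∈ U} ≠ 0 :=
  (hU.preimage continuous_subtype_val).measure_ne_zero _ ⟨b, hb⟩

end Sphere

theorem Submodule.exists_mem_forall_notMem_of_forall_not_le {K V : Type*} [DivisionRing K]
    [Infinite K] [AddCommGroup V] [Module K V] (U : Submodule K V) (𝒲 : Finset (Submodule K V))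
    (h : ∀ W ∈ 𝒲, ¬ U ≤ W) : ∃ z ∈ U, ∀ W ∈ 𝒲, z ∉ W := by
  classical
  have htop : ⊤ ∉ 𝒲.image (Submodule.comap U.subtype) := by
    simpa [Submodule.comap_subtype_eq_top] using h
  obtain ⟨z, hz⟩ :=
    (Set.ne_univ_iff_exists_notMem _).mp (Subspace.biUnion_ne_univ_of_top_notMem htop)
  simp only [Finset.mem_image, mem_iUnion, not_exists] at hz
  exact ⟨z, z.2, fun W hW hzW => hz _ ⟨W, hW, rfl⟩ hzW⟩

theorem Submodule.exists_norm_eq_one_mem_forall_notMem {E : Type*} [NormedAddCommGroup E]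
    [NormedSpace ℝ E] (U : Submodule ℝ E) (hU : U ≠ ⊥) (𝒲 : Finset (Submodule ℝ E))
    (h : ∀ W ∈ 𝒲, ¬ U ≤ W) : ∃ z ∈ U, ‖z‖ = 1 ∧ ∀ W ∈ 𝒲, z ∉ W := by
  classical
  obtain ⟨z, hzU, hz⟩ := U.exists_mem_forall_notMem_of_forall_not_le (insert ⊥ 𝒲) <| by
    simpa [le_bot_iff] using And.intro hU h
  have hz0 : z ≠ 0 := fun h0 => hz ⊥ (Finset.mem_insert_self _ _) (h0 ▸ Submodule.zero_mem _)
  have hc : ‖z‖⁻¹ ≠ 0 := inv_ne_zero (norm_ne_zero_iff.mpr hz0)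
  refine ⟨‖z‖⁻¹ • z, U.smul_mem _ hzU, ?_, fun W hW hzW => ?_⟩
  · rw [norm_smul, norm_inv, norm_norm, inv_mul_cancel₀ (norm_ne_zero_iff.mpr hz0)]
  · exact hz W (Finset.mem_insert_of_mem hW) ((W.smul_mem_iff hc).mp hzW)

section ColumnSpan

variable {ι E : Type*} [AddCommGroup E] [Module ℝ E]

noncomputable def columnSpan (A : ι → E) (S : Finset ι) : Submodule ℝ E :=
  Submodule.span ℝ (A '' S)

variable {A : ι → E}

theorem mem_of_linearIndepOn_insert [DecidableEq ι] {S : Finset ι} {i : ι}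
    (h : LinearIndepOn ℝ A ↑(insert i S)) (hi : A i ∈ columnSpan A S) : i ∈ S := by
  by_contra hiS
  rw [Finset.coe_insert, linearIndepOn_insert (by simpa using hiS)] at h
  exact h.2 hi

theorem exists_card_lt_columnSpan_eq {D : Finset ι} (hD : ¬ LinearIndepOn ℝ A D) :
    ∃ S : Finset ι, S.card < D.card ∧ columnSpan A S = columnSpan A D := by
  classical
  obtain ⟨j, hjD, hj⟩ : ∃ j ∈ (D : Set ι), A j ∈ Submodule.span ℝ (A '' (↑D \ {j})) := by
    simpa [linearIndepOn_iff_notMem_span] using hD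
  refine ⟨D.erase j, Finset.card_erase_lt_of_mem hjD, ?_⟩
  rw [columnSpan, columnSpan, Finset.coe_erase, ← Submodule.span_insert_eq_span hj,
    ← Set.image_insert_eq, Set.insert_sdiff_singleton, Set.insert_eq_of_mem hjD]

variable [Fintype ι]

variable (A) in
def sparseRepresentations (k : ℕ) (z : E) : Set (ι → ℝ) :=
  {x | (support x).ncard ≤ k ∧ ∑ i, x i • A i = z}

theorem ncard_support_le_iff {x : ι → ℝ} {k : ℕ} :
    (support x).ncard ≤ k ↔ ∃ S : Finset ι, S.card ≤ k ∧ support x ⊆ S := by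
  classical
  refine ⟨fun h => ⟨(support x).toFinset, ?_, by simp⟩, fun ⟨S, hS, hxS⟩ => ?_⟩
  · rwa [← Set.ncard_eq_toFinset_card']
  · exact (Set.ncard_le_ncard hxS S.finite_toSet).trans (by rwa [Set.ncard_coe_finset])

variable (A) in
theorem sum_smul_eq_finset_sum_of_support_subset {x : ι → ℝ} {S : Finset ι}
    (hx : support x ⊆ S) : ∑ i, x i • A i = ∑ i ∈ S, x i • A i :=
  (Finset.sum_subset (Finset.subset_univ S) fun i _ hi => by
    rw [notMem_support.mp (mt (@hx i) hi), zero_smul]).symm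

theorem sum_smul_mem_columnSpan {x : ι → ℝ} {S : Finset ι} (hx : support x ⊆ S) :
    ∑ i, x i • A i ∈ columnSpan A S := by
  rw [sum_smul_eq_finset_sum_of_support_subset A hx]
  exact Submodule.sum_mem _ fun i hi => Submodule.smul_mem _ _ (Submodule.subset_span ⟨i, hi, rfl⟩)

theorem exists_support_subset_sum_smul_eq {S : Finset ι} {z : E} (hz : z ∈ columnSpan A S) :
    ∃ x : ι → ℝ, support x ⊆ S ∧ ∑ i, x i • A i = z := by
  obtain ⟨l, hl, rfl⟩ := (Finsupp.mem_span_image_iff_linearCombination ℝ).mp hz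
  refine ⟨l, fun i hi => hl (Finsupp.mem_support_iff.mpr hi), ?_⟩
  rw [Finsupp.linearCombination_apply, Finsupp.sum_fintype _ _ (by simp)]

theorem linearIndepOn_iff_forall_sum_smul_eq_zero {S : Finset ι} :
    LinearIndepOn ℝ A S ↔ ∀ u : ι → ℝ, support u ⊆ S → ∑ i, u i • A i = 0 → u = 0 := by
  rw [linearIndepOn_iff'']
  refine ⟨fun h u hu hsum => funext fun i => ?_, fun h t g hts hg hsum i _ => ?_⟩
  · by_cases hi : i ∈ S
    · exact h S u subset_rfl (fun j hj => notMem_support.mp (mt (@hu j) hj))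
        (sum_smul_eq_finset_sum_of_support_subset A hu ▸ hsum) i hi
    · exact notMem_support.mp (mt (@hu i) hi)
  · have hgt : support g ⊆ t := fun j hj => by_contra fun hjt => hj (hg j hjt)
    exact congrFun (h g (hgt.trans hts) (sum_smul_eq_finset_sum_of_support_subset A hgt ▸ hsum)) i

theorem LinearIndepOn.eq_of_sum_smul_eq {S : Finset ι} (hS : LinearIndepOn ℝ A S)
    {x y : ι → ℝ} (hx : support x ⊆ S) (hy : support y ⊆ S)
    (hxy : ∑ i, x i • A i = ∑ i, y i • A i) : x = y := by
  have hsupp : support (x - y) ⊆ S := (support_sub x y).trans (union_subset hx hy)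
  refine sub_eq_zero.mp (linearIndepOn_iff_forall_sum_smul_eq_zero.mp hS (x - y) hsupp ?_)
  simp only [Pi.sub_apply, sub_smul, Finset.sum_sub_distrib, hxy, sub_self]

theorem LinearIndepOn.sum_smul_notMem_columnSpan_erase [DecidableEq ι] {S : Finset ι}
    (hS : LinearIndepOn ℝ A S) {x : ι → ℝ} (hx : support x ⊆ S) {e : ι} (he : x e ≠ 0) :
    ∑ i, x i • A i ∉ columnSpan A (S.erase e) := by
  intro hmem
  obtain ⟨y, hy, hyx⟩ := exists_support_subset_sum_smul_eq hmem
  have hye : y e = 0 := notMem_support.mp fun h => by simpa using hy h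
  exact he (hS.eq_of_sum_smul_eq (hy.trans (by simp)) hx hyx ▸ hye)

theorem exists_maximal_columnSpan {k : ℕ} {S₁ : Finset ι} (hS₁ : S₁.card ≤ k) :
    ∃ S : Finset ι, S.card ≤ k ∧ columnSpan A S₁ ≤ columnSpan A S ∧
      ∀ T : Finset ι, T.card ≤ k → columnSpan A S ≤ columnSpan A T →
        columnSpan A T = columnSpan A S := by
  classical
  obtain ⟨S, hS, hmax⟩ := Finset.exists_maximalFor (columnSpan A)
    (Finset.univ.filter fun S => S.card ≤ k ∧ columnSpan A S₁ ≤ columnSpan A S)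
    ⟨S₁, by simpa using hS₁⟩
  simp only [Finset.mem_filter, Finset.mem_univ, true_and] at hS hmax
  exact ⟨S, hS.1, hS.2, fun T hT hST => le_antisymm (hmax ⟨hT, hS.2.trans hST⟩ hST) hST⟩

theorem sparseRepresentations_nontrivial_of_not_linearIndepOn {k : ℕ} {S : Finset ι}
    (hS : S.card ≤ k) (hdep : ¬ LinearIndepOn ℝ A S) {z : E} (hz : z ∈ columnSpan A S) :
    (sparseRepresentations A k z).Nontrivial := by
  obtain ⟨u, hu, hsum, hu0⟩ : ∃ u : ι → ℝ, support u ⊆ S ∧ ∑ i, u i • A i = 0 ∧ u ≠ 0 := by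
    simpa [linearIndepOn_iff_forall_sum_smul_eq_zero] using hdep
  obtain ⟨x, hx, rfl⟩ := exists_support_subset_sum_smul_eq hz
  refine ⟨x, ⟨ncard_support_le_iff.mpr ⟨S, hS, hx⟩, rfl⟩, x + u,
    ⟨ncard_support_le_iff.mpr ⟨S, hS, (support_add x u).trans (union_subset hx hu)⟩, ?_⟩,
    by simpa using hu0⟩
  simp [add_smul, Finset.sum_add_distrib, hsum]

theorem columnSpan_le_columnSpan_insert_erase [DecidableEq ι] {S : Finset ι}
    (hS : LinearIndepOn ℝ A S) {d : ι} {g : ι → ℝ} (hgS : support g ⊆ S)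
    (hg : ∑ i, g i • A i = A d) {e : ι} (he : g e ≠ 0) :
    columnSpan A S ≤ columnSpan A (insert d (S.erase e)) := by
  have hd : A d ∈ Submodule.span ℝ (insert (A e) (A '' ↑(S.erase e))) := by
    rw [← Set.image_insert_eq, ← Finset.coe_insert, Finset.insert_erase (hgS he), ← hg]
    exact sum_smul_mem_columnSpan hgS
  rw [columnSpan, Submodule.span_le]
  rintro _ ⟨i, hi, rfl⟩
  by_cases hie : i = e
  · subst hie
    rw [columnSpan, Finset.coe_insert, Set.image_insert_eq]
    exact mem_span_insert_exchange hd (hg ▸ hS.sum_smul_notMem_columnSpan_erase hgS he)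
  · exact Submodule.subset_span ⟨i, by simp [hie, hi], rfl⟩

/-- Exchanging a column `e` of `S` for a column `d ∉ S` with `A d ∈ span (A '' S)` yields a second
`k`-sparse representation of every `z ∈ span (A '' S)` whose coefficient at `e` is nonzero. -/
theorem exists_lt_columnSpan_sparseRepresentations_nontrivial_of_linearIndepOn {k : ℕ}
    {S : Finset ι} (hS : S.card ≤ k) (hind : LinearIndepOn ℝ A S) {d : ι} (hdS : d ∉ S)
    (hd : A d ∈ columnSpan A S) (hd0 : A d ≠ 0) :
    ∃ V₀ < columnSpan A S, ∀ z ∈ columnSpan A S, z ∉ V₀ →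
      (sparseRepresentations A k z).Nontrivial := by
  classical
  obtain ⟨g, hgS, hg⟩ := exists_support_subset_sum_smul_eq hd
  obtain ⟨e, he⟩ : ∃ e, g e ≠ 0 := by
    by_contra! h
    exact hd0 (by simp [← hg, h])
  have heS : e ∈ S := hgS he
  have hdnot : A d ∉ columnSpan A (S.erase e) := hg ▸ hind.sum_smul_notMem_columnSpan_erase hgS he
  refine ⟨columnSpan A (S.erase e), SetLike.lt_iff_le_and_exists.mpr
    ⟨Submodule.span_mono (image_mono (by simp)), A d, hd, hdnot⟩, fun z hz hz₀ => ?_⟩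
  obtain ⟨x, hxS, rfl⟩ := exists_support_subset_sum_smul_eq hz
  obtain ⟨x', hx'S, hx'⟩ := exists_support_subset_sum_smul_eq
    (columnSpan_le_columnSpan_insert_erase hind hgS hg he hz)
  have hxe : x e ≠ 0 := fun h0 => hz₀ (sum_smul_mem_columnSpan fun i hi =>
    by simpa using And.intro (hxS hi) (fun hie : i = e => hi (hie ▸ h0)))
  have hx'e : x' e = 0 := notMem_support.mp fun h => by
    simpa [ne_of_mem_of_not_mem heS hdS] using hx'S h
  have hcard : (insert d (S.erase e)).card ≤ k := by
    have := Finset.card_insert_le d (S.erase e)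
    rw [Finset.card_erase_of_mem heS] at this
    have := Finset.card_pos.mpr ⟨e, heS⟩
    omega
  exact ⟨x, ⟨ncard_support_le_iff.mpr ⟨S, hS, hxS⟩, rfl⟩, x',
    ⟨ncard_support_le_iff.mpr ⟨_, hcard, hx'S⟩, hx'⟩, fun h => hxe (h ▸ hx'e)⟩

theorem exists_lt_columnSpan_sparseRepresentations_nontrivial (hA : ∀ i, A i ≠ 0) {k : ℕ}
    {D S : Finset ι} (hD : ¬ LinearIndepOn ℝ A D) (hDS : columnSpan A D ≤ columnSpan A S)
    (hS : S.card ≤ k) :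
    ∃ V₀ < columnSpan A S, ∀ z ∈ columnSpan A S, z ∉ V₀ →
      (sparseRepresentations A k z).Nontrivial := by
  by_cases hind : LinearIndepOn ℝ A S
  · obtain ⟨d, hdD, hdS⟩ : ∃ d ∈ D, d ∉ S := by
      by_contra! h
      exact hD (hind.mono h)
    exact exists_lt_columnSpan_sparseRepresentations_nontrivial_of_linearIndepOn hS hind hdS
      (hDS (Submodule.subset_span ⟨d, hdD, rfl⟩)) (hA d)
  · obtain ⟨i, hi⟩ : S.Nonempty := by
      by_contra! h
      exact hind (by simp [h])
    refine ⟨⊥, bot_lt_iff_ne_bot.mpr fun h => hA i ?_,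
      fun z hz _ => sparseRepresentations_nontrivial_of_not_linearIndepOn hS hind hz⟩
    have hAi : A i ∈ columnSpan A S := Submodule.subset_span ⟨i, hi, rfl⟩
    rwa [h, Submodule.mem_bot] at hAi

end ColumnSpan

section SparseApproximation

variable {ι E : Type*} [Fintype ι] [NormedAddCommGroup E] [InnerProductSpace ℝ E]
  [FiniteDimensional ℝ E] {A : ι → E} {k : ℕ}

variable (A k) in
def IsBestSparseApprox (b : E) (x : ι → ℝ) : Prop :=
  (support x).ncard ≤ k ∧
    ∀ y : ι → ℝ, (support y).ncard ≤ k → ‖∑ i, x i • A i - b‖ ≤ ‖∑ i, y i • A i - b‖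

theorem isBestSparseApprox_of_forall_le {S : Finset ι} {b : E}
    (hmin : ∀ T : Finset ι, T.card ≤ k →
      ‖b - (columnSpan A S).starProjection b‖ ≤ ‖b - (columnSpan A T).starProjection b‖)
    {x : ι → ℝ} (hx : x ∈ sparseRepresentations A k ((columnSpan A S).starProjection b)) :
    IsBestSparseApprox A k b x := by
  refine ⟨hx.1, fun y hy => ?_⟩
  obtain ⟨T, hT, hyT⟩ := ncard_support_le_iff.mp hy
  rw [hx.2, norm_sub_rev, norm_sub_rev _ b]
  exact (hmin T hT).trans ((columnSpan A T).norm_sub_starProjection_le b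
    (sum_smul_mem_columnSpan hyT))

theorem not_existsUnique_isBestSparseApprox {S : Finset ι} {b : E}
    (hmin : ∀ T : Finset ι, T.card ≤ k →
      ‖b - (columnSpan A S).starProjection b‖ ≤ ‖b - (columnSpan A T).starProjection b‖)
    (hrep : (sparseRepresentations A k ((columnSpan A S).starProjection b)).Nontrivial) :
    ¬ ∃! x, IsBestSparseApprox A k b x := by
  rintro ⟨y, -, hy⟩
  obtain ⟨x, hx, x', hx', hne⟩ := hrep
  exact hne ((hy x (isBestSparseApprox_of_forall_le hmin hx)).trans
    (hy x' (isBestSparseApprox_of_forall_le hmin hx')).symm)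

theorem existsUnique_isBestSparseApprox
    (hind : ∀ S : Finset ι, S.card ≤ k + 1 → LinearIndepOn ℝ A S) {b : E}
    (hb : ∀ S T : Finset ι, S.card ≤ k → T.card ≤ k → columnSpan A S ≠ columnSpan A T →
      ‖b - (columnSpan A S).starProjection b‖ ≠ ‖b - (columnSpan A T).starProjection b‖) :
    ∃! x, IsBestSparseApprox A k b x := by
  classical
  obtain ⟨S, hS, hmin⟩ := (Finset.univ.filter fun S : Finset ι => S.card ≤ k).exists_min_image
    (fun S => ‖b - (columnSpan A S).starProjection b‖) ⟨∅, by simp⟩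
  simp only [Finset.mem_filter, Finset.mem_univ, true_and] at hS hmin
  obtain ⟨x, hxS, hx⟩ :=
    exists_support_subset_sum_smul_eq ((columnSpan A S).starProjection_apply_mem b)
  have hbest : IsBestSparseApprox A k b x :=
    isBestSparseApprox_of_forall_le hmin ⟨ncard_support_le_iff.mpr ⟨S, hS, hxS⟩, hx⟩
  refine ⟨x, hbest, fun y hy => ?_⟩
  obtain ⟨T, hT, hyT⟩ := ncard_support_le_iff.mp hy.1
  have hdist : ‖b - ∑ i, y i • A i‖ = ‖b - (columnSpan A S).starProjection b‖ := by
    rw [← hx, norm_sub_rev, norm_sub_rev b]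
    exact le_antisymm (hy.2 x hbest.1) (hbest.2 y hy.1)
  have hAy := sum_smul_mem_columnSpan (A := A) hyT
  have hTS : columnSpan A T = columnSpan A S := by
    by_contra hne
    refine hb T S hT hS hne (le_antisymm ?_ (hmin T hT))
    exact hdist ▸ (columnSpan A T).norm_sub_starProjection_le b hAy
  have hyS : support y ⊆ S := fun i hi => by
    have hAi : A i ∈ columnSpan A T := Submodule.subset_span ⟨i, hyT hi, rfl⟩
    rw [hTS] at hAi
    exact mem_of_linearIndepOn_insert (hind _ ((Finset.card_insert_le i S).trans (by omega))) hAi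
  refine (hind S (by omega)).eq_of_sum_smul_eq hyS hxS ?_
  rw [hx]
  exact (columnSpan A S).eq_starProjection_of_norm_sub_le b (hTS ▸ hAy) hdist.le

variable [MeasurableSpace E] [BorelSpace E] (μ : Measure E) [μ.IsAddHaarMeasure]

theorem toSphere_setOf_not_existsUnique_isBestSparseApprox_eq_zero
    (hind : ∀ S : Finset ι, S.card ≤ k + 1 → LinearIndepOn ℝ A S) :
    μ.toSphere {b : sphere (0 : E) 1 | ¬ ∃! x, IsBestSparseApprox A k b x} = 0 := by
  set C : Set E := ⋃ (S : Finset ι) (T : Finset ι) (_ : columnSpan A S ≠ columnSpan A T),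
    {b | ‖b - (columnSpan A S).starProjection b‖ = ‖b - (columnSpan A T).starProjection b‖}
  have hC : MeasurableSet C := .iUnion fun S => .iUnion fun T => .iUnion fun _ =>
    (isClosed_eq (by fun_prop) (by fun_prop)).measurableSet
  have hcone : ∀ r : ℝ, 0 < r → ∀ x ∈ C, r • x ∈ C := by
    intro r hr x hx
    simp only [C, mem_iUnion, mem_ofPred_eq] at hx ⊢
    obtain ⟨S, T, hST, hx⟩ := hx
    refine ⟨S, T, hST, ?_⟩
    rw [Submodule.norm_sub_starProjection_smul _ hr.le,
      Submodule.norm_sub_starProjection_smul _ hr.le, hx]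
  have hnull : μ C = 0 := measure_iUnion_null fun S => measure_iUnion_null fun T =>
    measure_iUnion_null fun hST => measure_setOf_norm_sub_starProjection_eq μ hST
  refine measure_mono_null (fun b hb => ?_) (toSphere_eq_zero_of_cone μ hC hcone hnull)
  by_contra hbC
  refine hb (existsUnique_isBestSparseApprox hind fun S T _ _ hST hdist => hbC ?_)
  simp only [C, mem_iUnion]
  exact ⟨S, T, hST, hdist⟩

theorem toSphere_setOf_not_existsUnique_isBestSparseApprox_ne_zero {S : Finset ι}
    (hmax : ∀ T : Finset ι, T.card ≤ k → columnSpan A S ≤ columnSpan A T →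
      columnSpan A T = columnSpan A S)
    {V₀ : Submodule ℝ E} (hV₀ : V₀ < columnSpan A S)
    (hrep : ∀ z ∈ columnSpan A S, z ∉ V₀ → (sparseRepresentations A k z).Nontrivial) :
    μ.toSphere {b : sphere (0 : E) 1 | ¬ ∃! x, IsBestSparseApprox A k b x} ≠ 0 := by
  classical
  set V := columnSpan A S
  set U : Set E := {b | ∀ T : Finset ι, T.card ≤ k → columnSpan A T ≠ V →
      ‖b - V.starProjection b‖ < ‖b - (columnSpan A T).starProjection b‖} ∩
    V.starProjection ⁻¹' (V₀ : Set E)ᶜ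
  have hU : IsOpen U := by
    refine IsOpen.inter ?_ (V₀.closed_of_finiteDimensional.isOpen_compl.preimage (by fun_prop))
    simp only [ofPred_forall]
    exact isOpen_iInter_of_finite fun T => isOpen_iInter_of_finite fun _ =>
      isOpen_iInter_of_finite fun _ => isOpen_lt (by fun_prop) (by fun_prop)
  have hUbad : ∀ b ∈ U, ¬ ∃! x, IsBestSparseApprox A k b x := by
    rintro b ⟨hlt, hV₀b⟩
    refine not_existsUnique_isBestSparseApprox (fun T hT => ?_)
      (hrep _ (V.starProjection_apply_mem b) hV₀b)
    by_cases hTV : columnSpan A T = V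
    · rw [hTV]
    · exact (hlt T hT hTV).le
  set 𝒯 := (Finset.univ.filter fun T : Finset ι => T.card ≤ k ∧ columnSpan A T ≠ V)
  obtain ⟨z, hzV, hz1, hz⟩ := V.exists_norm_eq_one_mem_forall_notMem
    (bot_le.trans_lt hV₀).ne' (insert V₀ (𝒯.image (columnSpan A))) <| by
    simp only [Finset.mem_insert, Finset.mem_image, 𝒯, Finset.mem_filter, Finset.mem_univ,
      true_and]
    rintro W (rfl | ⟨T, ⟨hT, hTV⟩, rfl⟩) hVW
    · exact hV₀.not_ge hVW
    · exact hTV (hmax T hT hVW)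
  have hzU : z ∈ U := by
    have hproj : V.starProjection z = z := V.starProjection_eq_self_iff.mpr hzV
    refine ⟨fun T hT hTV => ?_, ?_⟩
    · rw [hproj, sub_self, norm_zero]
      exact (columnSpan A T).norm_sub_starProjection_pos
        (hz _ (Finset.mem_insert_of_mem (Finset.mem_image_of_mem _ (by simp [𝒯, hT, hTV]))))
    · simpa [hproj] using hz V₀ (Finset.mem_insert_self _ _)
  exact fun h => toSphere_ne_zero_of_isOpen μ hU (b := ⟨z, by simpa using hz1⟩) hzU
    (measure_mono_null (fun b hb => hUbad b hb) h)

theorem toSphere_setOf_not_existsUnique_isBestSparseApprox_eq_zero_iff (hA : ∀ i, A i ≠ 0) :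
    μ.toSphere {b : sphere (0 : E) 1 | ¬ ∃! x, IsBestSparseApprox A k b x} = 0 ↔
      ∀ S : Finset ι, S.card ≤ k + 1 → LinearIndepOn ℝ A S := by
  refine ⟨fun h => ?_, toSphere_setOf_not_existsUnique_isBestSparseApprox_eq_zero μ⟩
  by_contra! ⟨D, hD, hdep⟩
  obtain ⟨S₁, hS₁, hS₁D⟩ := exists_card_lt_columnSpan_eq hdep
  obtain ⟨S, hS, hS₁S, hmax⟩ := exists_maximal_columnSpan (A := A) (show S₁.card ≤ k by omega)
  obtain ⟨V₀, hV₀, hrep⟩ :=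
    exists_lt_columnSpan_sparseRepresentations_nontrivial hA hdep (hS₁D ▸ hS₁S) hS
  exact toSphere_setOf_not_existsUnique_isBestSparseApprox_ne_zero μ hmax hV₀ hrep h

end SparseApproximation

theorem natCast_lt_spark_iff {m N : ℕ} (A : Fin N → EuclideanSpace ℝ (Fin m)) (n : ℕ) :
    (n : ℕ∞) < spark A ↔ ∀ S : Finset (Fin N), S.card ≤ n → LinearIndepOn ℝ A S := by
  rw [← ENat.natCast_add_one_le_iff, spark, le_sInf_iff]
  constructor
  · intro h S hS
    by_contra hdep
    have := h _ ⟨S, rfl, hdep⟩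
    norm_cast at this
    omega
  · rintro h _ ⟨S, rfl, hdep⟩
    by_contra hlt
    exact hdep (h S (by norm_cast at hlt; omega))

theorem unique_sparse_solution_ae_iff_general {m N : ℕ}
    (A : Fin N → EuclideanSpace ℝ (Fin m)) (k : ℕ)
    (hunit : ∀ i, ‖A i‖ = 1) :
    (volume : Measure (EuclideanSpace ℝ (Fin m))).toSphere
      {b : Metric.sphere (0 : EuclideanSpace ℝ (Fin m)) 1 |
        ¬ ∃! x : Fin N → ℝ, {i | x i ≠ 0}.ncard ≤ k ∧
          ∀ y : Fin N → ℝ, {i | y i ≠ 0}.ncard ≤ k →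
            ‖(∑ i, x i • A i) - (b : EuclideanSpace ℝ (Fin m))‖ ≤
              ‖(∑ i, y i • A i) - (b : EuclideanSpace ℝ (Fin m))‖} = 0 ↔
    (k : ℕ∞) < spark A - 1 := by
  have hA : ∀ i, A i ≠ 0 := fun i h => by simpa [h] using hunit i
  rw [lt_tsub_iff_right, ← Nat.cast_add_one, natCast_lt_spark_iff]
  exact toSphere_setOf_not_existsUnique_isBestSparseApprox_eq_zero_iff volume hA

/-- For `b` drawn uniformly from the unit sphere of `ℝ^m`, the optimal `k`-sparse
approximation `argmin_{‖x‖₀ ≤ k} ‖Ax - b‖₂` is unique with probability 1 if and only if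
`k < spark(A) - 1` (every `k+1` columns independent); otherwise uniqueness fails on a set of
positive measure. -/
theorem unique_sparse_solution_ae_iff {m N : ℕ} (hm : 0 < m)
    (A : Fin N → EuclideanSpace ℝ (Fin m)) (k : ℕ)
    (hunit : ∀ i, ‖A i‖ = 1)
    (hspan : Submodule.span ℝ (Set.range A) = ⊤)
    (hk1 : 1 ≤ k) (hkN : k ≤ N) :
    (volume : Measure (EuclideanSpace ℝ (Fin m))).toSphere
      {b : Metric.sphere (0 : EuclideanSpace ℝ (Fin m)) 1 |
        ¬ ∃! x : Fin N → ℝ, {i | x i ≠ 0}.ncard ≤ k ∧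
          ∀ y : Fin N → ℝ, {i | y i ≠ 0}.ncard ≤ k →
            ‖(∑ i, x i • A i) - (b : EuclideanSpace ℝ (Fin m))‖ ≤
              ‖(∑ i, y i • A i) - (b : EuclideanSpace ℝ (Fin m))‖} = 0 ↔
    (k : ℕ∞) < spark A - 1 :=
  unique_sparse_solution_ae_iff_general A k hunit
end
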